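/- arXiv:2604.13005 — 2 statements merged into one kernel-verified Lean document; each statement's English description precedes it below -/
import Mathlib

section
/- Let G be a graph and let P be an independent set partition of G (a vertex of the Bell colouring graph B(G)) containing a part {u,v} of size 2 and a part {w} of size 1 such that neither uw nor vw is an edge of G. Then there exist two non-adjacent neighbours Q₁, Q₂ of P in B(G) such that every common neighbour of Q₁ and Q₂ in B(G) lies in the closed neighbourhood N[P]; in particular P fails the property that any two non-adjacent neighbours of P have a common neighbour outside N[P]. -/
/-!
Let `Q₁` be `P` with `u` isolated in a new singleton part and `Q₂` be `P` with `w` moved into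
the part `{u, v}`. They disagree on all three pairs of the triangle `uvw`, while a single move
only changes pairs through the moved vertex, so `Q₁` and `Q₂` are not adjacent. If `R` is one
move of `x` away from `Q₁` and one move of `y` away from `Q₂`, then every pair of the triangle
contains `x` or `y`. Either `x ∈ {u, v}`, and then `R` is one move of `x` away from `P`
(isolating `u` only changes the pair `uv`); or `x = w` and `y` is one of `u, v`, and then `R`
is one move of the other one away from `P`.
-/

open Finset

variable {V : Type*} [Fintype V] [DecidableEq V]

def IsISP (G : SimpleGraph V) (P : Finpartition (univ : Finset V)) : Prop :=
  ∀ A ∈ P.parts, ∀ u ∈ A, ∀ v ∈ A, ¬ G.Adj u v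

def samePart (P : Finpartition (univ : Finset V)) (u v : V) : Prop :=
  ∃ A ∈ P.parts, u ∈ A ∧ v ∈ A

def MovedBy (P Q : Finpartition (univ : Finset V)) (x : V) : Prop :=
  P ≠ Q ∧ ∀ u v : V, u ≠ x → v ≠ x → (samePart P u v ↔ samePart Q u v)

def BellGraph (G : SimpleGraph V) :
    SimpleGraph {P : Finpartition (univ : Finset V) // IsISP G P} where
  Adj P Q := ∃ x, MovedBy P.1 Q.1 x
  symm := by
    constructor
    rintro P Q ⟨x, hne, h⟩
    exact ⟨x, Ne.symm hne, fun u v hu hv => (h u v hu hv).symm⟩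
  loopless := by
    constructor
    rintro P ⟨x, hne, _⟩
    exact hne rfl

def UpperBell (G : SimpleGraph V) (k : ℕ) :
    SimpleGraph {P : Finpartition (univ : Finset V) // IsISP G P ∧ k ≤ P.parts.card} where
  Adj P Q := ∃ x, MovedBy P.1 Q.1 x
  symm := by
    constructor
    rintro P Q ⟨x, hne, h⟩
    exact ⟨x, Ne.symm hne, fun u v hu hv => (h u v hu hv).symm⟩
  loopless := by
    constructor
    rintro P ⟨x, hne, _⟩
    exact hne rfl

def IsUniversal (G : SimpleGraph V) (v : V) : Prop :=
  ∀ w, w ≠ v → G.Adj v w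

section Relations

variable {α : Type*}

def AgreeOff (r s : α → α → Prop) (x : α) : Prop :=
  ∀ a b, a ≠ x → b ≠ x → (r a b ↔ s a b)

theorem AgreeOff.trans {r s t : α → α → Prop} {x : α} (hrs : AgreeOff r s x)
    (hst : AgreeOff s t x) : AgreeOff r t x :=
  fun a b ha hb => (hrs a b ha hb).trans (hst a b ha hb)

theorem not_agreeOff_of_triangle {r s : α → α → Prop} {u v w x : α}
    (huv : u ≠ v) (huw : u ≠ w) (hvw : v ≠ w)
    (hruv : ¬ r u v) (hruw : ¬ r u w) (hrvw : ¬ r v w)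
    (hsuv : s u v) (hsuw : s u w) (hsvw : s v w) : ¬ AgreeOff r s x := by
  intro h
  by_cases hxu : x = u
  · subst hxu
    exact hrvw ((h v w huv.symm huw.symm).2 hsvw)
  by_cases hxv : x = v
  · subst hxv
    exact hruw ((h u w huv hvw.symm).2 hsuw)
  exact hruv ((h u v (Ne.symm hxu) (Ne.symm hxv)).2 hsuv)

theorem agreeOff_of_forall_of_forall {p r : α → α → Prop} [Std.Symm p] [Std.Symm r]
    {w z : α} (hoff : ∀ a b, a ≠ z → b ≠ z → a ≠ w → b ≠ w → (p a b ↔ r a b))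
    (hw : ∀ b, b ≠ z → (p w b ↔ r w b)) : AgreeOff p r z := by
  intro a b ha hb
  by_cases haw : a = w
  · exact haw ▸ hw b hb
  by_cases hbw : b = w
  · subst hbw
    exact (Std.Symm.iff a b).trans ((hw a ha).trans (Std.Symm.iff b a))
  exact hoff a b ha hb haw hbw

/- Here `x` is forced to be `w`. The only pair avoiding `v` that neither `q₁` nor `q₂` pins down
is `wu`, and there `r v w` together with `¬ r u v` gives `¬ r w u`. -/
theorem agreeOff_of_agreeOff_of_not_rel {p q₁ q₂ r : α → α → Prop} [Std.Symm p]
    [Std.Symm r] [IsTrans α r] {u v w x : α} (huv : u ≠ v) (huw : u ≠ w) (hxv : x ≠ v)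
    (hpq₁ : AgreeOff p q₁ v) (hpq₂ : ∀ b, b ≠ u → b ≠ v → (p w b ↔ q₂ w b))
    (hpwu : ¬ p w u) (hq₁vw : ¬ q₁ v w) (hq₂vw : q₂ v w)
    (hrq₁ : AgreeOff q₁ r x) (hrq₂ : AgreeOff q₂ r u) (hruv : ¬ r u v) :
    AgreeOff p r v := by
  have hrvw : r v w := (hrq₂ v w huv.symm huw.symm).1 hq₂vw
  obtain rfl : x = w := by
    by_contra hxw
    exact hq₁vw ((hrq₁ v w hxv.symm (Ne.symm hxw)).2 hrvw)
  refine agreeOff_of_forall_of_forall (w := x)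
    (fun a b ha hb hax hbx => (hpq₁ a b ha hb).trans (hrq₁ a b hax hbx)) fun b hbv => ?_
  by_cases hbu : b = u
  · subst hbu
    exact iff_of_false hpwu fun hrxb => hruv (symm_of r (trans_of r hrvw hrxb))
  · exact (hpq₂ b hbu hbv).trans (hrq₂ x b huw.symm hbu)

theorem exists_agreeOff_of_agreeOff_of_agreeOff {p q₁ q₂ r : α → α → Prop} [Std.Symm p]
    [Std.Symm r] [IsTrans α r] {u v w x y : α} (huv : u ≠ v) (huw : u ≠ w) (hvw : v ≠ w)
    (hpq₁u : AgreeOff p q₁ u) (hpq₁v : AgreeOff p q₁ v)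
    (hpq₂ : ∀ b, b ≠ u → b ≠ v → (p w b ↔ q₂ w b))
    (hpwu : ¬ p w u) (hpwv : ¬ p w v)
    (hq₁uv : ¬ q₁ u v) (hq₁uw : ¬ q₁ u w) (hq₁vw : ¬ q₁ v w)
    (hq₂uv : q₂ u v) (hq₂uw : q₂ u w) (hq₂vw : q₂ v w)
    (hrq₁ : AgreeOff q₁ r x) (hrq₂ : AgreeOff q₂ r y) : ∃ z, AgreeOff p r z := by
  by_cases hxu : x = u
  · exact ⟨u, hpq₁u.trans (hxu ▸ hrq₁)⟩
  by_cases hxv : x = v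
  · exact ⟨v, hpq₁v.trans (hxv ▸ hrq₁)⟩
  have hruv : ¬ r u v := fun h => hq₁uv ((hrq₁ u v (Ne.symm hxu) (Ne.symm hxv)).2 h)
  have hy : y = u ∨ y = v := by
    by_contra! hy
    exact hruv ((hrq₂ u v hy.1.symm hy.2.symm).1 hq₂uv)
  rcases hy with rfl | rfl
  · exact ⟨v, agreeOff_of_agreeOff_of_not_rel huv huw hxv hpq₁v hpq₂ hpwu hq₁vw hq₂vw
      hrq₁ hrq₂ hruv⟩
  · exact ⟨u, agreeOff_of_agreeOff_of_not_rel huv.symm hvw hxu hpq₁u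
      (fun b hbv hbu => hpq₂ b hbu hbv) hpwv hq₁uw hq₂uw hrq₁ hrq₂
      fun h => hruv (symm_of r h)⟩

end Relations

section Partitions

variable (P : Finpartition (univ : Finset V))

theorem samePart_iff_part_eq (a b : V) : samePart P a b ↔ P.part a = P.part b := by
  rw [← P.mem_part_iff_part_eq_part (mem_univ a) (mem_univ b), P.mem_part_iff_exists]
  rfl

theorem samePart_iff_mem_part (a b : V) : samePart P a b ↔ b ∈ P.part a := by
  rw [samePart_iff_part_eq, P.mem_part_iff_part_eq_part (mem_univ b) (mem_univ a), eq_comm]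

theorem samePart_iff_mem_of_mem_parts {a : V} {A : Finset V} (hA : A ∈ P.parts) (ha : a ∈ A)
    (b : V) : samePart P a b ↔ b ∈ A := by
  rw [samePart_iff_mem_part, P.part_eq_of_mem hA ha]

instance : Std.Symm (samePart P) where
  symm a b h := by rw [samePart_iff_part_eq] at *; exact h.symm

instance : IsTrans V (samePart P) where
  trans a b c hab hbc := by rw [samePart_iff_part_eq] at *; exact hab.trans hbc

theorem isISP_iff (G : SimpleGraph V) : IsISP G P ↔ ∀ a b, samePart P a b → ¬ G.Adj a b :=
  ⟨fun h a b ⟨A, hA, ha, hb⟩ => h A hA a ha b hb,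
    fun h A hA a ha b hb => h a b ⟨A, hA, ha, hb⟩⟩

open Classical in
noncomputable def fiberPartition {β : Type*} (f : V → β) : Finpartition (univ : Finset V) :=
  Finpartition.ofSetoid (Setoid.ker f)

theorem samePart_fiberPartition {β : Type*} (f : V → β) (a b : V) :
    samePart (fiberPartition f) a b ↔ f a = f b := by
  classical
  rw [samePart_iff_mem_part, fiberPartition, Finpartition.mem_part_ofSetoid_iff_rel,
    Setoid.ker_def]

noncomputable def isolate (u : V) : Finpartition (univ : Finset V) :=
  fiberPartition fun a => (P.part a, a = u)

noncomputable def moveInto (x y : V) : Finpartition (univ : Finset V) :=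
  fiberPartition fun a => P.part (if a = x then y else a)

variable {P}

theorem samePart_isolate {u a b : V} :
    samePart (isolate P u) a b ↔ samePart P a b ∧ (a = u ↔ b = u) := by
  rw [isolate, samePart_fiberPartition, Prod.mk.injEq, eq_iff_iff, samePart_iff_part_eq]

theorem samePart_moveInto {x y a b : V} :
    samePart (moveInto P x y) a b ↔
      samePart P (if a = x then y else a) (if b = x then y else b) := by
  rw [moveInto, samePart_fiberPartition, samePart_iff_part_eq]

theorem agreeOff_isolate (u : V) : AgreeOff (samePart P) (samePart (isolate P u)) u := by
  intro a b ha hb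
  simp [samePart_isolate, ha, hb]

theorem agreeOff_moveInto (x y : V) : AgreeOff (samePart P) (samePart (moveInto P x y)) x := by
  intro a b ha hb
  simp [samePart_moveInto, ha, hb]

variable {G : SimpleGraph V}

theorem IsISP.isolate (hP : IsISP G P) (u : V) : IsISP G (isolate P u) := by
  rw [isISP_iff] at *
  exact fun a b h => hP a b (samePart_isolate.1 h).1

theorem IsISP.moveInto (hP : IsISP G P) {x y : V} {A : Finset V} (hA : A ∈ P.parts) (hy : y ∈ A)
    (hxA : ∀ b ∈ A, ¬ G.Adj x b) : IsISP G (moveInto P x y) := by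
  rw [isISP_iff] at *
  intro a b h
  rw [samePart_moveInto] at h
  split_ifs at h with hax hbx hbx
  · exact hax ▸ hbx ▸ G.irrefl
  · exact hax ▸ hxA b ((samePart_iff_mem_of_mem_parts P hA hy b).1 h)
  · exact hbx ▸ fun hadj =>
      hxA a ((samePart_iff_mem_of_mem_parts P hA hy a).1 (symm_of _ h)) hadj.symm
  · exact hP a b h

end Partitions

section BellGraph

variable {G : SimpleGraph V} {P Q : {P : Finpartition (univ : Finset V) // IsISP G P}}

theorem BellGraph.adj_of_agreeOff {x a b : V} (h : AgreeOff (samePart P.1) (samePart Q.1) x)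
    (hab : ¬ (samePart P.1 a b ↔ samePart Q.1 a b)) : (BellGraph G).Adj P Q :=
  ⟨x, fun hPQ => hab (by rw [hPQ]), h⟩

theorem BellGraph.exists_agreeOff_of_adj (h : (BellGraph G).Adj P Q) :
    ∃ x, AgreeOff (samePart P.1) (samePart Q.1) x :=
  let ⟨x, _, hx⟩ := h
  ⟨x, hx⟩

theorem BellGraph.eq_or_adj_of_agreeOff {z : V}
    (h : AgreeOff (samePart P.1) (samePart Q.1) z) : Q = P ∨ (BellGraph G).Adj P Q := by
  by_cases hQP : Q = P
  · exact .inl hQP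
  · exact .inr ⟨z, fun hPQ => hQP (Subtype.ext hPQ.symm), h⟩

end BellGraph

section PairAndSingleton

variable {P : Finpartition (univ : Finset V)} {u v w : V}

theorem samePart_left_iff_of_pair_mem_parts (h₁ : {u, v} ∈ P.parts) (b : V) :
    samePart P u b ↔ b = u ∨ b = v := by
  rw [samePart_iff_mem_of_mem_parts P h₁ (mem_insert_self u {v}), mem_insert, mem_singleton]

theorem samePart_right_iff_of_pair_mem_parts (h₁ : {u, v} ∈ P.parts) (b : V) :
    samePart P v b ↔ b = u ∨ b = v := by
  rw [samePart_iff_mem_of_mem_parts P h₁ (mem_insert_of_mem (mem_singleton_self v)), mem_insert,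
    mem_singleton]

theorem samePart_iff_of_singleton_mem_parts (h₂ : {w} ∈ P.parts) (b : V) :
    samePart P w b ↔ b = w := by
  rw [samePart_iff_mem_of_mem_parts P h₂ (mem_singleton_self w), mem_singleton]

theorem ne_of_pair_mem_parts_of_singleton_mem_parts (h₁ : {u, v} ∈ P.parts)
    (h₂ : {w} ∈ P.parts) (huv : u ≠ v) : u ≠ w ∧ v ≠ w := by
  have hne : ({w} : Finset V) ≠ {u, v} := fun h => by
    simpa [card_pair huv] using congrArg card h
  have hw : w ∉ ({u, v} : Finset V) := fun hw =>
    hne (P.eq_of_mem_parts h₂ h₁ (mem_singleton_self w) hw)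
  simp only [mem_insert, mem_singleton, not_or] at hw
  exact ⟨Ne.symm hw.1, Ne.symm hw.2⟩

theorem agreeOff_isolate_of_pair_mem_parts (h₁ : {u, v} ∈ P.parts) :
    AgreeOff (samePart P) (samePart (isolate P u)) v := by
  intro a b ha hb
  rw [samePart_isolate, iff_self_and]
  intro hab
  constructor
  · rintro rfl
    exact ((samePart_left_iff_of_pair_mem_parts h₁ b).1 hab).resolve_right hb
  · rintro rfl
    exact ((samePart_left_iff_of_pair_mem_parts h₁ a).1 (symm_of _ hab)).resolve_right ha

theorem isolate_triangle (h₁ : {u, v} ∈ P.parts) (h₂ : {w} ∈ P.parts) (huv : u ≠ v) :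
    ¬ samePart (isolate P u) u v ∧ ¬ samePart (isolate P u) u w ∧
      ¬ samePart (isolate P u) v w := by
  obtain ⟨huw, hvw⟩ := ne_of_pair_mem_parts_of_singleton_mem_parts h₁ h₂ huv
  simp [samePart_isolate, samePart_right_iff_of_pair_mem_parts h₁, huv.symm, huw.symm, hvw.symm]

theorem moveInto_triangle (h₁ : {u, v} ∈ P.parts) (h₂ : {w} ∈ P.parts) (huv : u ≠ v) :
    samePart (moveInto P w u) u v ∧ samePart (moveInto P w u) u w ∧
      samePart (moveInto P w u) v w := by
  obtain ⟨huw, hvw⟩ := ne_of_pair_mem_parts_of_singleton_mem_parts h₁ h₂ huv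
  simp [samePart_moveInto, samePart_left_iff_of_pair_mem_parts h₁,
    samePart_right_iff_of_pair_mem_parts h₁, huw, hvw]

theorem not_agreeOff_isolate_moveInto (h₁ : {u, v} ∈ P.parts) (h₂ : {w} ∈ P.parts)
    (huv : u ≠ v) (x : V) :
    ¬ AgreeOff (samePart (isolate P u)) (samePart (moveInto P w u)) x := by
  obtain ⟨huw, hvw⟩ := ne_of_pair_mem_parts_of_singleton_mem_parts h₁ h₂ huv
  obtain ⟨h₁uv, h₁uw, h₁vw⟩ := isolate_triangle h₁ h₂ huv
  obtain ⟨h₂uv, h₂uw, h₂vw⟩ := moveInto_triangle h₁ h₂ huv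
  exact not_agreeOff_of_triangle huv huw hvw h₁uv h₁uw h₁vw h₂uv h₂uw h₂vw

theorem exists_agreeOff_of_agreeOff_isolate_of_agreeOff_moveInto {r : V → V → Prop}
    [Std.Symm r] [IsTrans V r] (h₁ : {u, v} ∈ P.parts) (h₂ : {w} ∈ P.parts) (huv : u ≠ v)
    {x y : V} (hx : AgreeOff (samePart (isolate P u)) r x)
    (hy : AgreeOff (samePart (moveInto P w u)) r y) : ∃ z, AgreeOff (samePart P) r z := by
  obtain ⟨huw, hvw⟩ := ne_of_pair_mem_parts_of_singleton_mem_parts h₁ h₂ huv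
  obtain ⟨h₁uv, h₁uw, h₁vw⟩ := isolate_triangle h₁ h₂ huv
  obtain ⟨h₂uv, h₂uw, h₂vw⟩ := moveInto_triangle h₁ h₂ huv
  have hP (b : V) (hb : b ≠ w) : ¬ samePart P w b :=
    (samePart_iff_of_singleton_mem_parts h₂ b).not.2 hb
  have hmove (b : V) (hbu : b ≠ u) (hbv : b ≠ v) :
      samePart P w b ↔ samePart (moveInto P w u) w b := by
    by_cases hbw : b = w <;> simp [samePart_moveInto, hbw, samePart_left_iff_of_pair_mem_parts h₁,
      samePart_iff_of_singleton_mem_parts h₂, hbu, hbv]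
  exact exists_agreeOff_of_agreeOff_of_agreeOff huv huw hvw (agreeOff_isolate u)
    (agreeOff_isolate_of_pair_mem_parts h₁) hmove (hP u huw) (hP v hvw)
    h₁uv h₁uw h₁vw h₂uv h₂uw h₂vw hx hy

end PairAndSingleton

theorem stmt10 (G : SimpleGraph V)
    (P : {P : Finpartition (univ : Finset V) // IsISP G P})
    (u v w : V) (huv : u ≠ v)
    (h1 : ({u, v} : Finset V) ∈ P.1.parts) (h2 : ({w} : Finset V) ∈ P.1.parts)
    (e1 : ¬ G.Adj u w) (e2 : ¬ G.Adj v w) :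
    (∃ Q₁ Q₂, (BellGraph G).Adj P Q₁ ∧ (BellGraph G).Adj P Q₂ ∧
      ¬ (BellGraph G).Adj Q₁ Q₂ ∧
      ∀ R, (BellGraph G).Adj Q₁ R → (BellGraph G).Adj Q₂ R →
        (R = P ∨ (BellGraph G).Adj P R)) ∧
    ¬ (∀ Q₁ Q₂, (BellGraph G).Adj P Q₁ → (BellGraph G).Adj P Q₂ →
        ¬ (BellGraph G).Adj Q₁ Q₂ →
        ∃ R, (BellGraph G).Adj Q₁ R ∧ (BellGraph G).Adj Q₂ R ∧
          R ≠ P ∧ ¬ (BellGraph G).Adj P R) := by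
  let Q₁ : {P : Finpartition (univ : Finset V) // IsISP G P} := ⟨isolate P.1 u, P.2.isolate u⟩
  let Q₂ : {P : Finpartition (univ : Finset V) // IsISP G P} :=
    ⟨moveInto P.1 w u, P.2.moveInto h1 (mem_insert_self u {v}) (by simp [G.adj_comm, e1, e2])⟩
  obtain ⟨huw, hvw⟩ := ne_of_pair_mem_parts_of_singleton_mem_parts h1 h2 huv
  have hP₁ : (BellGraph G).Adj P Q₁ :=
    BellGraph.adj_of_agreeOff (agreeOff_isolate u) (a := u) (b := v) <| by
      simp [Q₁, samePart_left_iff_of_pair_mem_parts h1, (isolate_triangle h1 h2 huv).1]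
  have hP₂ : (BellGraph G).Adj P Q₂ :=
    BellGraph.adj_of_agreeOff (agreeOff_moveInto w u) (a := u) (b := w) <| by
      simp [Q₂, samePart_left_iff_of_pair_mem_parts h1, huw.symm, hvw.symm,
        (moveInto_triangle h1 h2 huv).2.1]
  have hQ₁₂ : ¬ (BellGraph G).Adj Q₁ Q₂ := fun ⟨x, _, hx⟩ =>
    not_agreeOff_isolate_moveInto h1 h2 huv x hx
  have hcommon (R) (hR₁ : (BellGraph G).Adj Q₁ R) (hR₂ : (BellGraph G).Adj Q₂ R) :
      R = P ∨ (BellGraph G).Adj P R := by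
    obtain ⟨x, hx⟩ := BellGraph.exists_agreeOff_of_adj hR₁
    obtain ⟨y, hy⟩ := BellGraph.exists_agreeOff_of_adj hR₂
    obtain ⟨z, hz⟩ := exists_agreeOff_of_agreeOff_isolate_of_agreeOff_moveInto h1 h2 huv hx hy
    exact BellGraph.eq_or_adj_of_agreeOff hz
  refine ⟨⟨Q₁, Q₂, hP₁, hP₂, hQ₁₂, hcommon⟩, fun h => ?_⟩
  obtain ⟨R, hR₁, hR₂, hRP, hPR⟩ := h Q₁ Q₂ hP₁ hP₂ hQ₁₂
  exact (hcommon R hR₁ hR₂).elim hRP hPR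
end

section
/- Let G be a graph on n vertices with n ≥ 3 whose graph obtained by removing all universal vertices is isomorphic to the empty graph on 3 vertices (three pairwise non-adjacent vertices), and let k ≤ n − 2. Then B_{≥k}(G) is isomorphic to K₅ minus an edge. -/
open Finset

variable {V : Type*} [Fintype V] [DecidableEq V]

def K5minusEdge : SimpleGraph (Fin 5) where
  Adj a b := a ≠ b ∧ ¬ (a = 0 ∧ b = 1) ∧ ¬ (a = 1 ∧ b = 0)
  symm := by constructor; rintro a b ⟨h1, h2, h3⟩; exact ⟨h1.symm, fun h => h3 ⟨h.2, h.1⟩, fun h => h2 ⟨h.2, h.1⟩⟩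
  loopless := by constructor; rintro a ⟨h, _⟩; exact h rfl

/-!
Only the three non-universal vertices can share a part of an independent partition, so such a
partition is determined by the partition it induces on those three vertices, one of the five
partitions of a 3-set, and it has at least `n - 2` parts. Any two partitions of a 3-set differ by
moving a single element, except the coarsest and the discrete one: this is the missing edge.
-/

section BlockRel

variable {α : Type*}

def blockRel (B : Finset α) (i j : α) : Prop := i = j ∨ i ∈ B ∧ j ∈ B

instance [DecidableEq α] (B : Finset α) : DecidableRel (blockRel B) := fun _ _ =>
  inferInstanceAs (Decidable (_ ∨ _))

def blockSetoid (B : Finset α) : Setoid α where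
  r := blockRel B
  iseqv :=
    { refl := fun _ => Or.inl rfl
      symm := fun h => h.imp Eq.symm And.symm
      trans := by
        rintro i j l (rfl | ⟨hi, hj⟩) (rfl | ⟨hj', hl⟩)
        exacts [Or.inl rfl, Or.inr ⟨hj', hl⟩, Or.inr ⟨hi, hj⟩, Or.inr ⟨hi, hl⟩] }

instance [DecidableEq α] (B : Finset α) : DecidableRel (blockSetoid B).r :=
  inferInstanceAs (DecidableRel (blockRel B))

lemma blockRel_iff_of_left_notMem {B : Finset α} {i j : α} (hi : i ∉ B) : blockRel B i j ↔ i = j :=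
  or_iff_left fun h => hi h.1

lemma blockRel_iff_of_right_notMem {B : Finset α} {i j : α} (hj : j ∉ B) : blockRel B i j ↔ i = j :=
  or_iff_left fun h => hj h.2

lemma blockRel_map_apply {β : Type*} (ι : α ↪ β) {B : Finset α} {i j : α} :
    blockRel (B.map ι) (ι i) (ι j) ↔ blockRel B i j := by
  simp only [blockRel, mem_map', ι.injective.eq_iff]

def BlockMoved (B₁ B₂ : Finset α) : Prop :=
  ∃ y, (∃ i j, ¬(blockRel B₁ i j ↔ blockRel B₂ i j)) ∧
    ∀ i j, i ≠ y → j ≠ y → (blockRel B₁ i j ↔ blockRel B₂ i j)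

end BlockRel

/-- Each partition of `Fin 3` has at most one non-singleton block (`∅` encodes the discrete one).
Indices `0` and `1`, the coarsest and the discrete partition, are the pair `K5minusEdge` leaves
non-adjacent. -/
def fin3Block : Fin 5 → Finset (Fin 3) := ![univ, ∅, {0, 1}, {0, 2}, {1, 2}]

lemma K5minusEdge_adj_iff_blockMoved (m m' : Fin 5) :
    K5minusEdge.Adj m m' ↔ BlockMoved (fin3Block m) (fin3Block m') := by
  change (m ≠ m' ∧ ¬(m = 0 ∧ m' = 1) ∧ ¬(m = 1 ∧ m' = 0)) ↔ _
  revert m m'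
  unfold BlockMoved
  decide

lemma fin3Block_eq_of_blockRel_iff {m m' : Fin 5}
    (h : ∀ i j, blockRel (fin3Block m) i j ↔ blockRel (fin3Block m') i j) : m = m' := by
  revert m m' h
  decide

lemma exists_blockRel_fin3Block_iff {β : Type*} (g : Fin 3 → β) :
    ∃ m, ∀ i j, blockRel (fin3Block m) i j ↔ g i = g j := by
  simp only [Fin.exists_fin_succ, Fin.forall_fin_succ, Fin.exists_fin_zero, Fin.forall_fin_zero,
    blockRel, fin3Block]
  by_cases h01 : g 0 = g 1 <;> by_cases h02 : g 0 = g 2 <;> by_cases h12 : g 1 = g 2 <;>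
    simp [h01, h02, h12, eq_comm] <;> grind

section Partition

variable {α : Type*}

lemma samePart_iff_part_eq_s18 {P : Finpartition (univ : Finset V)} {u v : V} :
    samePart P u v ↔ P.part u = P.part v := by
  constructor
  · rintro ⟨A, hA, hu, hv⟩
    rw [P.part_eq_of_mem hA hu, P.part_eq_of_mem hA hv]
  · intro h
    exact ⟨P.part u, P.part_mem.mpr (mem_univ u), P.mem_part (mem_univ u),
      h ▸ P.mem_part (mem_univ v)⟩

lemma Finpartition.eq_of_samePart_iff {P Q : Finpartition (univ : Finset V)}
    (h : ∀ u v, samePart P u v ↔ samePart Q u v) : P = Q := by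
  have hpart : ∀ u, P.part u = Q.part u := fun u => by
    ext v
    simp only [P.mem_part_iff_part_eq_part (mem_univ v) (mem_univ u),
      Q.mem_part_iff_part_eq_part (mem_univ v) (mem_univ u), ← samePart_iff_part_eq_s18, h]
  ext A
  constructor <;> intro hA
  · obtain ⟨u, hu⟩ := P.nonempty_of_mem_parts hA
    rw [← P.part_eq_of_mem hA hu, hpart]
    exact Q.part_mem.mpr (mem_univ u)
  · obtain ⟨u, hu⟩ := Q.nonempty_of_mem_parts hA
    rw [← Q.part_eq_of_mem hA hu, ← hpart]
    exact P.part_mem.mpr (mem_univ u)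

def blockPartition (B : Finset V) : Finpartition (univ : Finset V) :=
  Finpartition.ofSetoid (blockSetoid B)

lemma samePart_blockPartition {B : Finset V} {u v : V} :
    samePart (blockPartition B) u v ↔ blockRel B u v := by
  rw [samePart_iff_part_eq_s18, eq_comm,
    ← (blockPartition B).mem_part_iff_part_eq_part (mem_univ v) (mem_univ u)]
  exact Finpartition.mem_part_ofSetoid_iff_rel

lemma samePart_blockPartition_map_iff_iff (ι : α ↪ V) (B₁ B₂ : Finset α) (u v : V) :
    (samePart (blockPartition (B₁.map ι)) u v ↔ samePart (blockPartition (B₂.map ι)) u v) ↔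
      ∀ i j, ι i = u → ι j = v → (blockRel B₁ i j ↔ blockRel B₂ i j) := by
  simp only [samePart_blockPartition]
  have notMem_map {w : V} (hw : w ∉ Set.range ι) (B : Finset α) : w ∉ B.map ι := fun h =>
    hw (coe_map_subset_range ι B h)
  by_cases hu : u ∈ Set.range ι
  · by_cases hv : v ∈ Set.range ι
    · obtain ⟨i, rfl⟩ := hu
      obtain ⟨j, rfl⟩ := hv
      simp [blockRel_map_apply]
    · rw [blockRel_iff_of_right_notMem (notMem_map hv _),
        blockRel_iff_of_right_notMem (notMem_map hv _)]
      exact iff_of_true Iff.rfl fun _ j _ hj => absurd ⟨j, hj⟩ hv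
  · rw [blockRel_iff_of_left_notMem (notMem_map hu _),
      blockRel_iff_of_left_notMem (notMem_map hu _)]
    exact iff_of_true Iff.rfl fun i _ hi => absurd ⟨i, hi⟩ hu

lemma exists_movedBy_blockPartition_map_iff (ι : α ↪ V) (B₁ B₂ : Finset α) :
    (∃ x, MovedBy (blockPartition (B₁.map ι)) (blockPartition (B₂.map ι)) x) ↔
      BlockMoved B₁ B₂ := by
  have agree := samePart_blockPartition_map_iff_iff ι B₁ B₂
  have ne_iff : blockPartition (B₁.map ι) ≠ blockPartition (B₂.map ι) ↔
      ∃ i j, ¬(blockRel B₁ i j ↔ blockRel B₂ i j) := by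
    refine ⟨fun hne => ?_, fun ⟨i, j, hij⟩ heq => hij ((agree _ _).mp (by rw [heq]) i j rfl rfl)⟩
    by_contra! h
    exact hne (Finpartition.eq_of_samePart_iff fun u v => (agree u v).mpr fun i j _ _ => h i j)
  constructor
  · rintro ⟨x, hne, hx⟩
    by_cases hxι : x ∈ Set.range ι
    · obtain ⟨y, rfl⟩ := hxι
      exact ⟨y, ne_iff.mp hne, fun i j hi hj =>
        (agree _ _).mp (hx _ _ (ι.injective.ne hi) (ι.injective.ne hj)) i j rfl rfl⟩
    · refine absurd (Finpartition.eq_of_samePart_iff fun u v => (agree u v).mpr ?_) hne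
      rintro i j rfl rfl
      exact (agree _ _).mp (hx _ _ (fun h => hxι ⟨i, h⟩) (fun h => hxι ⟨j, h⟩)) i j rfl rfl
  · rintro ⟨y, hne, hy⟩
    refine ⟨ι y, ne_iff.mpr hne, fun u v hu hv => (agree u v).mpr ?_⟩
    rintro i j rfl rfl
    exact hy i j (ne_of_apply_ne ι hu) (ne_of_apply_ne ι hv)

lemma eq_blockPartition_map_of_part_eq_iff (ι : α ↪ V) {P : Finpartition (univ : Finset V)}
    (hP : ∀ u v, samePart P u v → u ≠ v → u ∈ Set.range ι) {B : Finset α}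
    (hB : ∀ i j, blockRel B i j ↔ P.part (ι i) = P.part (ι j)) :
    P = blockPartition (B.map ι) := by
  refine Finpartition.eq_of_samePart_iff fun u v => ?_
  rw [samePart_blockPartition, samePart_iff_part_eq_s18]
  rcases eq_or_ne u v with rfl | huv
  · exact iff_of_true rfl (Or.inl rfl)
  by_cases hr : u ∈ Set.range ι ∧ v ∈ Set.range ι
  · obtain ⟨⟨i, rfl⟩, ⟨j, rfl⟩⟩ := hr
    rw [blockRel_map_apply, hB]
  · refine iff_of_false (fun h => hr ⟨?_, ?_⟩) fun h => hr ?_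
    · exact hP u v (samePart_iff_part_eq_s18.mpr h) huv
    · exact hP v u (samePart_iff_part_eq_s18.mpr h.symm) huv.symm
    · obtain ⟨hu, hv⟩ := h.resolve_left huv
      exact ⟨coe_map_subset_range ι B hu, coe_map_subset_range ι B hv⟩

end Partition

section Independent

variable {G : SimpleGraph V}

lemma isISP_blockPartition {B : Finset V} (hB : ∀ u ∈ B, ∀ v ∈ B, ¬G.Adj u v) :
    IsISP G (blockPartition B) := by
  intro A hA u hu v hv huv
  rcases samePart_blockPartition.mp ⟨A, hA, hu, hv⟩ with rfl | ⟨hu, hv⟩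
  exacts [G.loopless.irrefl u huv, hB u hu v hv huv]

lemma not_isUniversal_of_samePart {P : Finpartition (univ : Finset V)} (hP : IsISP G P) {u v : V}
    (h : samePart P u v) (huv : u ≠ v) : ¬IsUniversal G u := fun hu => by
  obtain ⟨A, hA, hu', hv'⟩ := h
  exact hP A hA u hu' v hv' (hu v huv.symm)

end Independent

lemma card_sub_card_add_one_le_card_parts {P : Finpartition (univ : Finset V)} {T : Finset V}
    (hT : T.Nonempty) (h : ∀ u v, samePart P u v → u ≠ v → u ∈ T) :
    Fintype.card V - #T + 1 ≤ #P.parts := by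
  obtain ⟨t, ht⟩ := hT
  have eq_of_part_eq {u v : V} (hu : u ∉ T) (huv : P.part u = P.part v) : u = v := by
    by_contra hne
    exact hu (h u v (samePart_iff_part_eq_s18.mpr huv) hne)
  have hinj : Set.InjOn P.part ↑Tᶜ := fun u hu _ _ huv => eq_of_part_eq (mem_compl.mp hu) huv
  have hnotMem : P.part t ∉ Tᶜ.image P.part := fun hmem => by
    obtain ⟨u, hu, hut⟩ := mem_image.mp hmem
    exact mem_compl.mp hu (eq_of_part_eq (mem_compl.mp hu) hut ▸ ht)
  have hsub : insert (P.part t) (Tᶜ.image P.part) ⊆ P.parts :=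
    insert_subset (P.part_mem.mpr (mem_univ t)) fun _ hA => by
      obtain ⟨u, -, rfl⟩ := mem_image.mp hA
      exact P.part_mem.mpr (mem_univ u)
  calc Fintype.card V - #T + 1 = #(insert (P.part t) (Tᶜ.image P.part)) := by
        rw [card_insert_of_notMem hnotMem, card_image_of_injOn hinj, card_compl]
    _ ≤ #P.parts := card_le_card hsub

lemma nonempty_upperBell_iso_K5minusEdge {G : SimpleGraph V} {k : ℕ} (ι : Fin 3 ↪ V)
    (hind : ∀ i j, ¬G.Adj (ι i) (ι j)) (huniv : ∀ v, v ∉ Set.range ι → IsUniversal G v)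
    (hk : k ≤ Fintype.card V - 2) : Nonempty (UpperBell G k ≃g K5minusEdge) := by
  have hsame : ∀ P, IsISP G P → ∀ u v, samePart P u v → u ≠ v → u ∈ Set.range ι :=
    fun P hP u v h huv => not_not.mp fun hu => not_isUniversal_of_samePart hP h huv (huniv u hu)
  have hcard : ∀ P, IsISP G P → k ≤ #P.parts := fun P hP => by
    have := card_sub_card_add_one_le_card_parts (T := univ.map ι) (by simp)
      fun u v h huv => by simpa using hsame P hP u v h huv
    rw [card_map, card_univ, Fintype.card_fin] at this
    omega
  have hISP : ∀ m, IsISP G (blockPartition ((fin3Block m).map ι)) := fun m =>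
    isISP_blockPartition (by simp [hind])
  let f : Fin 5 → {P : Finpartition (univ : Finset V) // IsISP G P ∧ k ≤ #P.parts} :=
    fun m => ⟨_, hISP m, hcard _ (hISP m)⟩
  have hf : Function.Bijective f := by
    refine ⟨fun m m' hmm' => fin3Block_eq_of_blockRel_iff fun i j => ?_, fun P => ?_⟩
    · exact (samePart_blockPartition_map_iff_iff ι _ _ _ _).mp
        (by rw [show blockPartition _ = _ from congrArg Subtype.val hmm']) i j rfl rfl
    · obtain ⟨m, hm⟩ := exists_blockRel_fin3Block_iff (P.1.part ∘ ι)
      exact ⟨m, Subtype.ext (eq_blockPartition_map_of_part_eq_iff ι (hsame P.1 P.2.1) hm).symm⟩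
  exact ⟨RelIso.symm
    ⟨Equiv.ofBijective f hf, fun {m m'} => (exists_movedBy_blockPartition_map_iff ι _ _).trans
      (K5minusEdge_adj_iff_blockMoved m m').symm⟩⟩

theorem stmt18_general (G : SimpleGraph V) (k : ℕ)
    (hiso : Nonempty
      ((SimpleGraph.induce {v : V | ¬ IsUniversal G v} G) ≃g (⊥ : SimpleGraph (Fin 3))))
    (hk : k ≤ Fintype.card V - 2) :
    Nonempty (UpperBell G k ≃g K5minusEdge) := by
  obtain ⟨e⟩ := hiso
  let ι : Fin 3 ↪ V := e.symm.toEquiv.toEmbedding.trans (Function.Embedding.subtype _)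
  refine nonempty_upperBell_iso_K5minusEdge ι (fun i j h => e.symm.map_adj_iff.mp h)
    (fun v hv => ?_) hk
  by_contra hu
  exact hv ⟨e ⟨v, hu⟩, by simp [ι]⟩

theorem stmt18 (G : SimpleGraph V) (k : ℕ) (hn : 3 ≤ Fintype.card V)
    (hiso : Nonempty
      ((SimpleGraph.induce {v : V | ¬ IsUniversal G v} G) ≃g (⊥ : SimpleGraph (Fin 3))))
    (hk : k ≤ Fintype.card V - 2) :
    Nonempty (UpperBell G k ≃g K5minusEdge) :=
  stmt18_general G k hiso hk
end
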